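/- arXiv:2012.14992 — 2 statements merged into one kernel-verified Lean document; each statement's English description precedes it below -/
import Mathlib

section
/- Let G be a graph with no cycle of length 3 and no cycle of length 5, let F_1, …, F_n be matchings of size n in G, and let q be the maximum size of a rainbow matching. Then (3n − 4q)(n − q) ≤ 3q. -/
/-!
Let `I` be a maximum rainbow matching with `q` edges on the vertex set `M`, and let `k = n - q`
be the number of colours it misses. Maximality forbids trading `r` edges of `I` for `r + 1`
disjoint edges of distinct missing colours. An alternating path of length 3 or 5 whose edges
outside `I` have distinct missing colours and whose two end edges leave `M` would give such a
trade, unless its outer ends coincide; then it closes up into a 3- or 5-cycle, which is excluded.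

Paths of length 3 show that every edge of a missing colour meets `M`, and that when one end of
an edge of `I` has leaving edges of two missing colours, its other end has none. Since each
missing colour has at least `2k` leaving edges, counting them at the edges of `I` gives
`2k² ≤ s k + 2 (q - s)`, where `s` is the number of edges of `I` with an end of leaving degree
at least 3. Paths of length 5 show that no edge of a missing colour joins the other ends of two
such edges, so each of the `n` edges of a missing colour meets the remaining `2q - s` vertices
of `M`, whence `k n ≤ (2q - s) k`. Together these give `3k² ≤ qk + 3q`.
-/

open Finset SimpleGraph

section RainbowMatching

variable {V ι : Type*}

theorem SimpleGraph.exists_isCycle_length_five {G : SimpleGraph V} {a b c d e : V}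
    (hab : G.Adj a b) (hbc : G.Adj b c) (hcd : G.Adj c d) (hde : G.Adj d e) (hea : G.Adj e a)
    (hac : a ≠ c) (had : a ≠ d) (hbd : b ≠ d) (hbe : b ≠ e) (hce : c ≠ e) :
    ∃ w : G.Walk a a, w.IsCycle ∧ w.length = 5 := by
  refine ⟨.cons hab (.cons hbc (.cons hcd (.cons hde (.cons hea .nil)))), ?_, rfl⟩
  simp [Walk.cons_isCycle_iff, Walk.cons_isPath_iff, hab.ne, hbc.ne, hcd.ne, hde.ne, hea.ne,
    hab.ne.symm, hea.ne.symm, hac, had, hbd, hbe, hce, hac.symm, had.symm]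

def PairwiseVertexDisjoint (J : Finset ι) (d : ι → Sym2 V) : Prop :=
  ∀ i ∈ J, ∀ j ∈ J, i ≠ j → ∀ v ∈ d i, v ∉ d j

def IsRainbow (F : ι → Finset (Sym2 V)) (J : Finset ι) (d : ι → Sym2 V) : Prop :=
  (∀ i ∈ J, d i ∈ F i) ∧ PairwiseVertexDisjoint J d

structure IsMaximumRainbow (F : ι → Finset (Sym2 V)) (I : Finset ι) (c : ι → Sym2 V) : Prop where
  isRainbow : IsRainbow F I c
  card_le : ∀ J d, IsRainbow F J d → #J ≤ #I

variable {F : ι → Finset (Sym2 V)} {I J N : Finset ι} {c d : ι → Sym2 V} {G : SimpleGraph V}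

theorem PairwiseVertexDisjoint.sum_card_inter_le [DecidableEq V] (h : PairwiseVertexDisjoint J d)
    (S : Finset V) : ∑ j ∈ J, #((d j).toFinset ∩ S) ≤ #S := by
  rw [← card_biUnion]
  · exact card_le_card (biUnion_subset.2 fun _ _ => inter_subset_right)
  · intro i hi j hj hij
    exact disjoint_left.2 fun v hvi hvj =>
      h i hi j hj hij v (Sym2.mem_toFinset.1 (mem_inter.1 hvi).1)
        (Sym2.mem_toFinset.1 (mem_inter.1 hvj).1)

theorem IsRainbow.eq_of_mem {i j : ι} {v : V} (h : IsRainbow F J d) (hi : i ∈ J) (hj : j ∈ J)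
    (hvi : v ∈ d i) (hvj : v ∈ d j) : i = j := by
  by_contra hij
  exact h.2 i hi j hj hij v hvi hvj

theorem IsRainbow.adj (h : IsRainbow F J d) (hG : ∀ i, ∀ e ∈ F i, e ∈ G.edgeSet) {m : ι}
    {u v : V} (hm : m ∈ J) (hdm : d m = s(u, v)) : G.Adj u v := by
  simpa [hdm] using hG m _ (h.1 m hm)

theorem IsRainbow.mono (h : IsRainbow F J d) (hNJ : N ⊆ J) : IsRainbow F N d :=
  ⟨fun i hi => h.1 i (hNJ hi), fun i hi j hj => h.2 i (hNJ hi) j (hNJ hj)⟩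

theorem isRainbow_singleton {i : ι} (hi : d i ∈ F i) : IsRainbow F {i} d := by
  refine ⟨fun j hj => ?_, fun a ha b hb hab => ?_⟩
  · rwa [mem_singleton.1 hj]
  · exact absurd ((mem_singleton.1 ha).trans (mem_singleton.1 hb).symm) hab

theorem IsRainbow.insert [DecidableEq ι] {i : ι} (h : IsRainbow F J d) (hi : d i ∈ F i)
    (hsep : ∀ j ∈ J, ∀ v ∈ d i, v ∉ d j) : IsRainbow F (insert i J) d := by
  refine ⟨fun j hj => ?_, fun a ha b hb hab v hva hvb => ?_⟩
  · rcases mem_insert.1 hj with rfl | hj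
    exacts [hi, h.1 j hj]
  · rcases mem_insert.1 ha with rfl | haJ <;> rcases mem_insert.1 hb with rfl | hbJ
    · exact hab rfl
    · exact hsep b hbJ v hva hvb
    · exact hsep a haJ v hvb hva
    · exact h.2 a haJ b hbJ hab v hva hvb

theorem IsRainbow.union_piecewise [DecidableEq ι] (hN : IsRainbow F N d) (hJ : IsRainbow F J c)
    (hNJ : Disjoint N J) (hsep : ∀ i ∈ N, ∀ j ∈ J, ∀ v ∈ d i, v ∉ c j) :
    IsRainbow F (N ∪ J) (N.piecewise d c) := by
  have hval : ∀ j ∈ J, N.piecewise d c j = c j := fun j hj =>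
    piecewise_eq_of_notMem _ _ _ (disjoint_right.1 hNJ hj)
  refine ⟨fun i hi => ?_, fun a ha b hb hab v hva hvb => ?_⟩
  · rcases mem_union.1 hi with hi | hi
    · simpa [piecewise_eq_of_mem _ _ _ hi] using hN.1 i hi
    · simpa [hval i hi] using hJ.1 i hi
  rcases mem_union.1 ha with haN | haJ <;> rcases mem_union.1 hb with hbN | hbJ
  · rw [piecewise_eq_of_mem _ _ _ haN] at hva
    rw [piecewise_eq_of_mem _ _ _ hbN] at hvb
    exact hN.2 a haN b hbN hab v hva hvb
  · rw [piecewise_eq_of_mem _ _ _ haN] at hva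
    rw [hval b hbJ] at hvb
    exact hsep a haN b hbJ v hva hvb
  · rw [hval a haJ] at hva
    rw [piecewise_eq_of_mem _ _ _ hbN] at hvb
    exact hsep b hbN a haJ v hvb hva
  · rw [hval a haJ] at hva
    rw [hval b hbJ] at hvb
    exact hJ.2 a haJ b hbJ hab v hva hvb

section MatchedVertices

variable [DecidableEq V]

def matchedVerts (I : Finset ι) (c : ι → Sym2 V) : Finset V := I.biUnion fun m => (c m).toFinset

theorem mem_matchedVerts {v : V} : v ∈ matchedVerts I c ↔ ∃ m ∈ I, v ∈ c m := by
  simp [matchedVerts]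

theorem notMem_of_notMem_matchedVerts {v : V} {m : ι} (hv : v ∉ matchedVerts I c) (hm : m ∈ I) :
    v ∉ c m :=
  fun hvm => hv (mem_matchedVerts.2 ⟨m, hm, hvm⟩)

theorem IsRainbow.pairwiseDisjoint_toFinset (h : IsRainbow F I c) :
    (I : Set ι).PairwiseDisjoint fun m => (c m).toFinset := fun i hi j hj hij =>
  disjoint_left.2 fun v hvi hvj =>
    h.2 i hi j hj hij v (Sym2.mem_toFinset.1 hvi) (Sym2.mem_toFinset.1 hvj)

theorem IsRainbow.card_matchedVerts (h : IsRainbow F I c) (hG : ∀ i, ∀ e ∈ F i, e ∈ G.edgeSet) :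
    #(matchedVerts I c) = 2 * #I := by
  rw [matchedVerts, card_biUnion h.pairwiseDisjoint_toFinset, sum_congr rfl fun m hm =>
    Sym2.card_toFinset_of_not_isDiag _ (G.not_isDiag_of_mem_edgeSet (hG m _ (h.1 m hm))),
    sum_const, smul_eq_mul, mul_comm]

variable [DecidableEq ι]

theorem IsMaximumRainbow.card_le_of_exchange {M : Finset ι} (hI : IsMaximumRainbow F I c)
    (hM : M ⊆ I) (hN : Disjoint N I) (hd : IsRainbow F N d)
    (hsep : ∀ i ∈ N, ∀ v ∈ d i, v ∈ matchedVerts I c → v ∈ matchedVerts M c) : #N ≤ #M := by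
  have hrb := hd.union_piecewise (hI.isRainbow.mono (sdiff_subset (s := I) (t := M)))
    (disjoint_of_subset_right sdiff_subset hN) fun i hi j hj v hv hvj => by
      obtain ⟨m, hm, hvm⟩ :=
        mem_matchedVerts.1 (hsep i hi v hv (mem_matchedVerts.2 ⟨j, (mem_sdiff.1 hj).1, hvj⟩))
      exact (mem_sdiff.1 hj).2 (hI.isRainbow.eq_of_mem (mem_sdiff.1 hj).1 (hM hm) hvj hvm ▸ hm)
  have := hI.card_le _ _ hrb
  rw [card_union_of_disjoint (disjoint_of_subset_right sdiff_subset hN),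
    card_sdiff_of_subset hM] at this
  have := card_le_card hM
  omega

theorem IsMaximumRainbow.exists_mem_matchedVerts (hI : IsMaximumRainbow F I c) {i : ι}
    (hi : i ∉ I) {e : Sym2 V} (he : e ∈ F i) : ∃ v ∈ e, v ∈ matchedVerts I c := by
  by_contra! hout
  have := hI.card_le_of_exchange (M := ∅) (N := {i}) (d := fun _ => e) (empty_subset _)
    (disjoint_singleton_left.2 hi) (isRainbow_singleton he)
    fun _ _ v hv hvI => absurd hvI (hout v hv)
  simp at this

theorem IsMaximumRainbow.eq_of_alternating_path_three (hI : IsMaximumRainbow F I c)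
    (hG : ∀ i, ∀ e ∈ F i, e ∈ G.edgeSet) {m i j : ι} {u v x y : V} (hm : m ∈ I)
    (hcm : c m = s(u, v)) (hi : i ∉ I) (hj : j ∉ I) (hij : i ≠ j)
    (hx : x ∉ matchedVerts I c) (hy : y ∉ matchedVerts I c)
    (hux : s(u, x) ∈ F i) (hvy : s(v, y) ∈ F j) : x = y := by
  by_contra hxy
  have hu : u ∈ c m := hcm ▸ Sym2.mem_mk_left u v
  have hv : v ∈ c m := hcm ▸ Sym2.mem_mk_right u v
  set d : ι → Sym2 V := fun t => if t = i then s(u, x) else s(v, y)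
  have hverts : ∀ t, ∀ w ∈ d t, w = u ∨ w = v ∨ w = x ∨ w = y := by
    intro t w
    dsimp only [d]
    split_ifs <;> simp only [Sym2.mem_iff] <;> tauto
  have hrb : IsRainbow F {i, j} d := by
    refine (isRainbow_singleton (by simpa [d, hij.symm] using hvy)).insert
      (by simpa [d] using hux) ?_
    have := notMem_of_notMem_matchedVerts hx hm
    have := notMem_of_notMem_matchedVerts hy hm
    simp only [d, mem_singleton, forall_eq, if_neg hij.symm, if_pos, Sym2.mem_iff]
    grind [(hI.isRainbow.adj hG hm hcm).ne]
  have := hI.card_le_of_exchange (M := {m}) (singleton_subset_iff.2 hm) (by simp [hi, hj]) hrb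
    fun t _ w hw hwI => by
      rcases hverts t w hw with rfl | rfl | rfl | rfl
      · exact mem_matchedVerts.2 ⟨m, mem_singleton_self m, hu⟩
      · exact mem_matchedVerts.2 ⟨m, mem_singleton_self m, hv⟩
      · exact absurd hwI hx
      · exact absurd hwI hy
  simp [hij] at this

theorem IsMaximumRainbow.eq_of_alternating_path_five (hI : IsMaximumRainbow F I c)
    (hG : ∀ i, ∀ e ∈ F i, e ∈ G.edgeSet) {m m' i j j' : ι} {u v u' v' y y' : V} (hm : m ∈ I)
    (hm' : m' ∈ I) (hmm' : m ≠ m') (hcm : c m = s(u, v)) (hcm' : c m' = s(u', v'))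
    (hi : i ∉ I) (hj : j ∉ I) (hj' : j' ∉ I) (hij : i ≠ j) (hij' : i ≠ j') (hjj' : j ≠ j')
    (hy : y ∉ matchedVerts I c) (hy' : y' ∉ matchedVerts I c)
    (hvv' : s(v, v') ∈ F i) (huy : s(u, y) ∈ F j) (huy' : s(u', y') ∈ F j') : y = y' := by
  by_contra hyy
  have hu : u ∈ c m := hcm ▸ Sym2.mem_mk_left u v
  have hv : v ∈ c m := hcm ▸ Sym2.mem_mk_right u v
  have hu' : u' ∈ c m' := hcm' ▸ Sym2.mem_mk_left u' v'
  have hv' : v' ∈ c m' := hcm' ▸ Sym2.mem_mk_right u' v'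
  set d : ι → Sym2 V := fun t => if t = i then s(v, v') else if t = j then s(u, y) else s(u', y')
  have hverts : ∀ t, ∀ w ∈ d t, w = u ∨ w = v ∨ w = u' ∨ w = v' ∨ w = y ∨ w = y' := by
    intro t w
    dsimp only [d]
    split_ifs <;> simp only [Sym2.mem_iff] <;> tauto
  have hrb : IsRainbow F {i, j, j'} d := by
    have := notMem_of_notMem_matchedVerts hy hm
    have := notMem_of_notMem_matchedVerts hy hm'
    have := notMem_of_notMem_matchedVerts hy' hm
    have := notMem_of_notMem_matchedVerts hy' hm'
    have := hI.isRainbow.2 m hm m' hm' hmm' u hu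
    have := hI.isRainbow.2 m hm m' hm' hmm' v hv
    refine ((isRainbow_singleton ?_).insert ?_ ?_).insert ?_ ?_
    all_goals simp only [d, mem_insert, mem_singleton, forall_eq_or_imp, forall_eq, if_pos,
      if_neg hij.symm, if_neg hij'.symm, if_neg hjj'.symm, Sym2.mem_iff]
    all_goals grind [(hI.isRainbow.adj hG hm hcm).ne, (hI.isRainbow.adj hG hm' hcm').ne]
  have := hI.card_le_of_exchange (M := {m, m'}) (insert_subset hm (singleton_subset_iff.2 hm'))
    (by simp [hi, hj, hj']) hrb fun t _ w hw hwI => by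
      rcases hverts t w hw with rfl | rfl | rfl | rfl | rfl | rfl
      · exact mem_matchedVerts.2 ⟨m, mem_insert_self _ _, hu⟩
      · exact mem_matchedVerts.2 ⟨m, mem_insert_self _ _, hv⟩
      · exact mem_matchedVerts.2 ⟨m', mem_insert_of_mem (mem_singleton_self _), hu'⟩
      · exact mem_matchedVerts.2 ⟨m', mem_insert_of_mem (mem_singleton_self _), hv'⟩
      · exact absurd hwI hy
      · exact absurd hwI hy'
  simp [hij, hij', hjj', hmm'] at this

end MatchedVertices

section Counting

open scoped Classical

variable [DecidableEq V] [DecidableEq ι]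

def HasLeavingEdge (F : ι → Finset (Sym2 V)) (I : Finset ι) (c : ι → Sym2 V) (i : ι) (v : V) :
    Prop :=
  ∃ x ∉ matchedVerts I c, s(v, x) ∈ F i

theorem IsMaximumRainbow.two_le_card_inter_add_card_inter (hI : IsMaximumRainbow F I c)
    (hG : ∀ i, ∀ e ∈ F i, e ∈ G.edgeSet) {i : ι} (hi : i ∉ I) {e : Sym2 V} (he : e ∈ F i) :
    2 ≤ #(e.toFinset ∩ matchedVerts I c) +
      #(e.toFinset ∩ {v ∈ matchedVerts I c | HasLeavingEdge F I c i v}) := by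
  induction e using Sym2.ind with | _ a b => ?_
  have hleave : ∀ {a b}, s(a, b) ∈ F i → a ∈ matchedVerts I c → b ∉ matchedVerts I c →
      1 + 1 ≤ #(s(a, b).toFinset ∩ matchedVerts I c) +
        #(s(a, b).toFinset ∩ {v ∈ matchedVerts I c | HasLeavingEdge F I c i v}) :=
    fun he ha hb => add_le_add (card_pos.2 ⟨_, mem_inter.2 ⟨by simp, ha⟩⟩)
      (card_pos.2 ⟨_, mem_inter.2 ⟨by simp, mem_filter.2 ⟨ha, _, hb, he⟩⟩⟩)
  obtain ⟨w, hw, hwI⟩ := hI.exists_mem_matchedVerts hi he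
  by_cases ha : a ∈ matchedVerts I c <;> by_cases hb : b ∈ matchedVerts I c
  · have : #(s(a, b).toFinset ∩ matchedVerts I c) = 2 := by
      rw [Sym2.toFinset_mk_eq, inter_eq_left.2 (insert_subset ha (singleton_subset_iff.2 hb)),
        card_pair (G.ne_of_adj (hG i _ he))]
    omega
  · exact hleave he ha hb
  · rw [Sym2.eq_swap] at he ⊢
    exact hleave he hb ha
  · rcases Sym2.mem_iff.1 hw with rfl | rfl <;> contradiction

theorem IsMaximumRainbow.two_mul_card_le (hI : IsMaximumRainbow F I c)
    (hG : ∀ i, ∀ e ∈ F i, e ∈ G.edgeSet) (hF : ∀ i, PairwiseVertexDisjoint (F i) id) {i : ι}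
    (hi : i ∉ I) : 2 * #(F i) ≤ 2 * #I + #{v ∈ matchedVerts I c | HasLeavingEdge F I c i v} := by
  calc 2 * #(F i) = ∑ _ ∈ F i, 2 := by rw [sum_const, smul_eq_mul, mul_comm]
    _ ≤ ∑ e ∈ F i, (#(e.toFinset ∩ matchedVerts I c) +
          #(e.toFinset ∩ {v ∈ matchedVerts I c | HasLeavingEdge F I c i v})) :=
        sum_le_sum fun e he => hI.two_le_card_inter_add_card_inter hG hi he
    _ ≤ #(matchedVerts I c) + #{v ∈ matchedVerts I c | HasLeavingEdge F I c i v} := by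
        rw [sum_add_distrib]
        exact add_le_add ((hF i).sum_card_inter_le _) ((hF i).sum_card_inter_le _)
    _ = _ := by rw [hI.isRainbow.card_matchedVerts hG]

variable [Fintype ι]

noncomputable def leavingDegree (F : ι → Finset (Sym2 V)) (I : Finset ι) (c : ι → Sym2 V)
    (v : V) : ℕ :=
  #{i ∈ Iᶜ | HasLeavingEdge F I c i v}

theorem leavingDegree_le_card_compl (v : V) : leavingDegree F I c v ≤ #Iᶜ :=
  card_le_card (filter_subset _ _)

theorem IsMaximumRainbow.card_compl_mul_le_sum_leavingDegree (hI : IsMaximumRainbow F I c)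
    (hG : ∀ i, ∀ e ∈ F i, e ∈ G.edgeSet) (hF : ∀ i, PairwiseVertexDisjoint (F i) id) {n : ℕ}
    (hsize : ∀ i, #(F i) = n) :
    #Iᶜ * (2 * n) ≤ #Iᶜ * (2 * #I) + ∑ v ∈ matchedVerts I c, leavingDegree F I c v := by
  calc #Iᶜ * (2 * n) = ∑ _ ∈ Iᶜ, 2 * n := by rw [sum_const, smul_eq_mul]
    _ ≤ ∑ i ∈ Iᶜ, (2 * #I + #((matchedVerts I c).bipartiteAbove (HasLeavingEdge F I c) i)) :=
        sum_le_sum fun i hi => hsize i ▸ hI.two_mul_card_le hG hF (mem_compl.1 hi)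
    _ = _ := by
        rw [sum_add_distrib, sum_const, smul_eq_mul,
          sum_card_bipartiteAbove_eq_sum_card_bipartiteBelow]
        rfl

theorem IsMaximumRainbow.leavingDegree_eq_zero_of_two_le (hI : IsMaximumRainbow F I c)
    (hG : ∀ i, ∀ e ∈ F i, e ∈ G.edgeSet) (h3 : G.CliqueFree 3) {m : ι} {u v : V} (hm : m ∈ I)
    (hcm : c m = s(u, v)) (hu : 2 ≤ leavingDegree F I c u) : leavingDegree F I c v = 0 := by
  by_contra hv
  obtain ⟨j, hj⟩ := card_pos.1 (Nat.pos_of_ne_zero hv)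
  obtain ⟨i, hi, hij⟩ := exists_mem_ne hu j
  rw [mem_filter, mem_compl] at hi hj
  obtain ⟨x, hx, hux⟩ := hi.2
  obtain ⟨y, hy, hvy⟩ := hj.2
  obtain rfl := hI.eq_of_alternating_path_three hG hm hcm hi.1 hj.1 hij hx hy hux hvy
  exact h3 {u, v, x} (is3Clique_triple_iff.2 ⟨hI.isRainbow.adj hG hm hcm, hG i _ hux, hG j _ hvy⟩)

theorem IsMaximumRainbow.sum_leavingDegree_edge_le (hI : IsMaximumRainbow F I c)
    (hG : ∀ i, ∀ e ∈ F i, e ∈ G.edgeSet) (h3 : G.CliqueFree 3) {m : ι} (hm : m ∈ I) :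
    ∑ v ∈ (c m).toFinset, leavingDegree F I c v ≤
      if ∃ u ∈ c m, 3 ≤ leavingDegree F I c u then #Iᶜ else 2 := by
  generalize hcm : c m = e
  induction e using Sym2.ind with | _ u v => ?_
  have hvu := hI.leavingDegree_eq_zero_of_two_le hG h3 hm (hcm.trans Sym2.eq_swap)
  have huv := hI.leavingDegree_eq_zero_of_two_le hG h3 hm hcm
  have := leavingDegree_le_card_compl (F := F) (I := I) (c := c) u
  have := leavingDegree_le_card_compl (F := F) (I := I) (c := c) v
  rw [Sym2.toFinset_mk_eq, sum_pair (hI.isRainbow.adj hG hm hcm).ne]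
  split_ifs with h
  · simp only [Sym2.mem_iff, exists_eq_or_imp, exists_eq_left] at h
    omega
  · simp only [Sym2.mem_iff, exists_eq_or_imp, exists_eq_left, not_or, not_le] at h
    omega

noncomputable def heavyEdges (F : ι → Finset (Sym2 V)) (I : Finset ι) (c : ι → Sym2 V) :
    Finset ι :=
  {m ∈ I | ∃ u ∈ c m, 3 ≤ leavingDegree F I c u}

noncomputable def heavyMates (F : ι → Finset (Sym2 V)) (I : Finset ι) (c : ι → Sym2 V) :
    Finset V :=
  {v ∈ matchedVerts I c | ∃ m ∈ I, ∃ u, c m = s(u, v) ∧ 3 ≤ leavingDegree F I c u}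

theorem IsMaximumRainbow.sum_leavingDegree_add_le (hI : IsMaximumRainbow F I c)
    (hG : ∀ i, ∀ e ∈ F i, e ∈ G.edgeSet) (h3 : G.CliqueFree 3) :
    ∑ v ∈ matchedVerts I c, leavingDegree F I c v + 2 * #(heavyEdges F I c) ≤
      #(heavyEdges F I c) * #Iᶜ + 2 * #I := by
  have hsum : ∑ v ∈ matchedVerts I c, leavingDegree F I c v ≤
      #(heavyEdges F I c) * #Iᶜ + #{m ∈ I | ¬∃ u ∈ c m, 3 ≤ leavingDegree F I c u} * 2 := by
    rw [matchedVerts, sum_biUnion hI.isRainbow.pairwiseDisjoint_toFinset]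
    refine (sum_le_sum fun m hm => hI.sum_leavingDegree_edge_le hG h3 hm).trans_eq ?_
    rw [sum_ite, sum_const, sum_const, smul_eq_mul, smul_eq_mul, heavyEdges]
  have := card_filter_add_card_filter_not (s := I) fun m => ∃ u ∈ c m, 3 ≤ leavingDegree F I c u
  rw [← heavyEdges] at this
  omega

theorem IsRainbow.card_heavyEdges_le (hI : IsRainbow F I c) :
    #(heavyEdges F I c) ≤ #(heavyMates F I c) := by
  calc #(heavyEdges F I c) = ∑ _ ∈ heavyEdges F I c, 1 := card_eq_sum_ones _
    _ ≤ ∑ m ∈ heavyEdges F I c, #((c m).toFinset ∩ heavyMates F I c) := by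
        refine sum_le_sum fun m hm => card_pos.2 ?_
        obtain ⟨hmI, u, hu, hdeg⟩ := mem_filter.1 hm
        exact ⟨_, mem_inter.2 ⟨Sym2.mem_toFinset.2 (Sym2.other_mem hu), mem_filter.2
          ⟨mem_matchedVerts.2 ⟨m, hmI, Sym2.other_mem hu⟩, m, hmI, u, (Sym2.other_spec hu).symm,
            hdeg⟩⟩⟩
    _ ≤ #(heavyMates F I c) := (hI.mono (filter_subset _ _)).2.sum_card_inter_le _

theorem IsMaximumRainbow.leavingDegree_eq_zero_of_mem_heavyMates (hI : IsMaximumRainbow F I c)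
    (hG : ∀ i, ∀ e ∈ F i, e ∈ G.edgeSet) (h3 : G.CliqueFree 3) {v : V}
    (hv : v ∈ heavyMates F I c) : leavingDegree F I c v = 0 := by
  obtain ⟨-, m, hm, u, hcm, hu⟩ := mem_filter.1 hv
  exact hI.leavingDegree_eq_zero_of_two_le hG h3 hm hcm (by omega)

theorem IsMaximumRainbow.notMem_heavyMates_of_leaving (hI : IsMaximumRainbow F I c)
    (hG : ∀ i, ∀ e ∈ F i, e ∈ G.edgeSet) (h3 : G.CliqueFree 3) {i : ι} (hi : i ∉ I)
    {a b : V} (he : s(a, b) ∈ F i) (hb : b ∉ matchedVerts I c) : a ∉ heavyMates F I c := by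
  intro ha
  have := hI.leavingDegree_eq_zero_of_mem_heavyMates hG h3 ha
  rw [leavingDegree, card_eq_zero, filter_eq_empty_iff] at this
  exact this (mem_compl.2 hi) ⟨b, hb, he⟩

theorem IsMaximumRainbow.notMem_heavyMates_of_mem_heavyMates (hI : IsMaximumRainbow F I c)
    (hG : ∀ i, ∀ e ∈ F i, e ∈ G.edgeSet) (h3 : G.CliqueFree 3)
    (h5 : ∀ (v : V) (w : G.Walk v v), w.IsCycle → w.length ≠ 5) {i : ι} (hi : i ∉ I)
    {a b : V} (he : s(a, b) ∈ F i) (ha : a ∈ heavyMates F I c) : b ∉ heavyMates F I c := by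
  intro hb
  obtain ⟨-, m, hm, u, hcm, hu⟩ := mem_filter.1 ha
  obtain ⟨-, m', hm', u', hcm', hu'⟩ := mem_filter.1 hb
  have hmm' : m ≠ m' := by
    rintro rfl
    rcases Sym2.eq_iff.1 (hcm.symm.trans hcm') with ⟨-, rfl⟩ | ⟨rfl, -⟩
    · exact G.irrefl (hG i _ he)
    · have := hI.leavingDegree_eq_zero_of_mem_heavyMates hG h3 hb
      omega
  -- three leaving colours at `u'` leave one distinct from both `i` and `j`
  obtain ⟨j, hj, hji⟩ := exists_mem_ne (by omega : 1 < leavingDegree F I c u) i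
  obtain ⟨j', hj', hj'ij⟩ := exists_mem_notMem_of_card_lt_card
    ((card_le_two (a := i) (b := j)).trans_lt (by omega : 2 < leavingDegree F I c u'))
  simp only [mem_insert, mem_singleton, not_or] at hj'ij
  rw [mem_filter, mem_compl] at hj hj'
  obtain ⟨y, hy, huy⟩ := hj.2
  obtain ⟨y', hy', huy'⟩ := hj'.2
  obtain rfl := hI.eq_of_alternating_path_five hG hm hm' hmm' hcm hcm' hi hj.1 hj'.1 hji.symm
    (Ne.symm hj'ij.1) (Ne.symm hj'ij.2) hy hy' he huy huy'
  have hsep := hI.isRainbow.2 m hm m' hm' hmm'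
  have hym := notMem_of_notMem_matchedVerts hy hm
  have hym' := notMem_of_notMem_matchedVerts hy hm'
  rw [hcm] at hsep hym
  rw [hcm'] at hsep hym'
  simp only [Sym2.mem_iff, forall_eq_or_imp, forall_eq, not_or] at hsep hym hym'
  obtain ⟨w, hw, hlen⟩ := exists_isCycle_length_five (hI.isRainbow.adj hG hm hcm) (hG i _ he)
    (hI.isRainbow.adj hG hm' hcm').symm (hG j' _ huy') (G.adj_symm (hG j _ huy))
    hsep.1.2 hsep.1.1 hsep.2.1 (Ne.symm hym.2) (Ne.symm hym'.2)
  exact h5 u w hw hlen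

theorem IsMaximumRainbow.exists_mem_sdiff_heavyMates (hI : IsMaximumRainbow F I c)
    (hG : ∀ i, ∀ e ∈ F i, e ∈ G.edgeSet) (h3 : G.CliqueFree 3)
    (h5 : ∀ (v : V) (w : G.Walk v v), w.IsCycle → w.length ≠ 5) {i : ι} (hi : i ∉ I)
    {e : Sym2 V} (he : e ∈ F i) : ∃ v ∈ e, v ∈ matchedVerts I c \ heavyMates F I c := by
  obtain ⟨w, hw, hwI⟩ := hI.exists_mem_matchedVerts hi he
  induction e using Sym2.ind with | _ a b => ?_
  by_contra! h
  simp only [Sym2.mem_iff, forall_eq_or_imp, forall_eq, mem_sdiff, not_and, not_not] at h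
  by_cases ha : a ∈ matchedVerts I c <;> by_cases hb : b ∈ matchedVerts I c
  · exact hI.notMem_heavyMates_of_mem_heavyMates hG h3 h5 hi he (h.1 ha) (h.2 hb)
  · exact hI.notMem_heavyMates_of_leaving hG h3 hi he hb (h.1 ha)
  · exact hI.notMem_heavyMates_of_leaving hG h3 hi (Sym2.eq_swap ▸ he) ha (h.2 hb)
  · rcases Sym2.mem_iff.1 hw with rfl | rfl <;> contradiction

theorem IsMaximumRainbow.card_compl_mul_add_le (hI : IsMaximumRainbow F I c)
    (hG : ∀ i, ∀ e ∈ F i, e ∈ G.edgeSet) (hF : ∀ i, PairwiseVertexDisjoint (F i) id)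
    (h3 : G.CliqueFree 3) (h5 : ∀ (v : V) (w : G.Walk v v), w.IsCycle → w.length ≠ 5) {n : ℕ}
    (hsize : ∀ i, #(F i) = n) :
    #Iᶜ * n + #(heavyEdges F I c) * #Iᶜ ≤ 2 * #I * #Iᶜ := by
  have hcover : #Iᶜ * n ≤ #(matchedVerts I c \ heavyMates F I c) * #Iᶜ := by
    refine card_mul_le_card_mul (fun i v => ∃ e ∈ F i, v ∈ e) (fun i hi => ?_)
      fun v _ => card_le_card (filter_subset _ _)
    calc n = ∑ _ ∈ F i, 1 := by rw [← hsize i, card_eq_sum_ones]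
      _ ≤ ∑ e ∈ F i, #((id e).toFinset ∩ (matchedVerts I c \ heavyMates F I c).bipartiteAbove
            (fun i v => ∃ e ∈ F i, v ∈ e) i) := by
          refine sum_le_sum fun e he => card_pos.2 ?_
          obtain ⟨v, hve, hv⟩ := hI.exists_mem_sdiff_heavyMates hG h3 h5 (mem_compl.1 hi) he
          exact ⟨v, mem_inter.2 ⟨Sym2.mem_toFinset.2 hve, mem_filter.2 ⟨hv, e, he, hve⟩⟩⟩
      _ ≤ _ := (hF i).sum_card_inter_le _
  have hcard : #(matchedVerts I c \ heavyMates F I c) + #(heavyEdges F I c) ≤ 2 * #I := by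
    have hsub : heavyMates F I c ⊆ matchedVerts I c := filter_subset _ _
    have hmates := card_le_card hsub
    rw [hI.isRainbow.card_matchedVerts hG] at hmates
    rw [card_sdiff_of_subset hsub, hI.isRainbow.card_matchedVerts hG]
    have := hI.isRainbow.card_heavyEdges_le
    omega
  nlinarith [Nat.mul_le_mul_right #Iᶜ hcard]

end Counting

end RainbowMatching

/-- Let `G` be a graph with no 3-cycle and no 5-cycle, let
`F₁, …, Fₙ` be matchings of size `n` in `G`, and let `q = |I|` be the maximum size of a
rainbow matching. Then `(3n - 4q)(n - q) ≤ 3q`. -/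
theorem stmt_18 {V : Type*} [DecidableEq V] (G : SimpleGraph V) (n : ℕ)
    (hfree : ∀ (v : V) (w : G.Walk v v), w.IsCycle → w.length ≠ 3 ∧ w.length ≠ 5)
    (F : Fin n → Finset (Sym2 V))
    (hedges : ∀ i, ∀ e ∈ F i, e ∈ G.edgeSet)
    (hmatch : ∀ i, ∀ e ∈ F i, ∀ f ∈ F i, e ≠ f → ∀ v, v ∈ e → v ∉ f)
    (hsize : ∀ i, (F i).card = n)
    (I : Finset (Fin n)) (c : Fin n → Sym2 V)
    (hc : ∀ i ∈ I, c i ∈ F i)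
    (hdisj : ∀ i ∈ I, ∀ j ∈ I, i ≠ j → ∀ v, v ∈ c i → v ∉ c j)
    (hmax : ∀ (J : Finset (Fin n)) (d : Fin n → Sym2 V),
      (∀ i ∈ J, d i ∈ F i) →
      (∀ i ∈ J, ∀ j ∈ J, i ≠ j → ∀ v, v ∈ d i → v ∉ d j) →
      J.card ≤ I.card) :
    (3 * (n : ℝ) - 4 * (I.card : ℝ)) * ((n : ℝ) - (I.card : ℝ)) ≤ 3 * (I.card : ℝ) := by
  have hI : IsMaximumRainbow F I c := ⟨⟨hc, hdisj⟩, fun J d hd => hmax J d hd.1 hd.2⟩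
  have h3 : G.CliqueFree 3 := fun s hs => by
    obtain ⟨u, w, hw, hlen⟩ := is3Clique_iff_exists_cycle_length_three.1 ⟨s, hs⟩
    exact (hfree u w hw).1 hlen
  have hlow := hI.card_compl_mul_le_sum_leavingDegree hedges hmatch hsize
  have hup := hI.sum_leavingDegree_add_le hedges h3
  have hcover := hI.card_compl_mul_add_le hedges hmatch h3 (fun v w hw => (hfree v w hw).2) hsize
  have hn : #Iᶜ + #I = n := by
    rw [card_compl, Fintype.card_fin, Nat.sub_add_cancel (card_le_univ I |>.trans_eq (by simp))]
  generalize #Iᶜ = k, #I = q, #(heavyEdges F I c) = s,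
    ∑ v ∈ matchedVerts I c, leavingDegree F I c v = B at *
  rw [← hn] at hlow hcover ⊢
  have key : 3 * (k * k) ≤ q * k + 3 * q := by nlinarith
  have : (3 * (k * k) : ℝ) ≤ q * k + 3 * q := by exact_mod_cast key
  push_cast
  linarith
end

section
/- Let F_1, …, F_n be pairwise disjoint matchings of size n in a graph, and let q be the maximum size of a rainbow matching. Then (3n − 4q)(n − q) ≤ 6q. -/
/-!
Let `R` be the maximum rainbow matching, `q = |R|`, and call the `u = n - q` colours it misses
unused. By maximality every edge of an unused colour `k` meets `V(R)`; counting the vertices of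
`V(R)` covered by `F k`, those on pendant edges (edges leaving `V(R)`) twice, gives
`2n ≤ |covered k| + |pendant k|`.

Exchange arguments control the pendant edges. If an end `y` of an edge `xy` of `R` carries a
pendant edge, then `x` carries pendant edges of at most two unused colours, as otherwise `xy` could
be traded for two disjoint pendant edges. So an edge of `R` carries pendant edges of at most four
colours, unless one end carries at least four and the other end, called barren, none. Trading two
such edges of `R` for three new ones shows that no unused colour joins two barren vertices. Hence
the `F k`-partners of the covered barren vertices are further vertices of `V(R)`, neither barren
nor pendant, which gives `2b + |pendant k| + |covered k| ≤ 4q` for every unused `k`, `b` being the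
number of barren vertices. With the first count this gives `n + b ≤ 2q`; summing the first count
over the unused colours and double counting pendant edges gives `2nu ≤ 2qu + ub + 4(q - b)`, and
the bound follows by algebra.
-/

open Finset

namespace RainbowMatching

open scoped Classical

noncomputable section

variable {V : Type*}

def VertexDisjoint (e f : Sym2 V) : Prop := ∀ v ∈ e, v ∉ f

lemma VertexDisjoint.symm {e f : Sym2 V} (h : VertexDisjoint e f) : VertexDisjoint f e :=
  fun v hf he => h v he hf

@[simp] lemma vertexDisjoint_mk {a b c d : V} :
    VertexDisjoint s(a, b) s(c, d) ↔ a ≠ c ∧ a ≠ d ∧ b ≠ c ∧ b ≠ d := by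
  simp only [VertexDisjoint, Sym2.mem_iff]
  grind

lemma card_eq_sum_card_filter_mem {M : Finset (Sym2 V)}
    (hM : ∀ e ∈ M, ∀ f ∈ M, e ≠ f → VertexDisjoint e f) {S : Finset V}
    (hS : ∀ v ∈ S, ∃ e ∈ M, v ∈ e) :
    S.card = ∑ e ∈ M, (S.filter (· ∈ e)).card := by
  rw [← card_biUnion]
  · congr 1
    ext v
    simp only [mem_biUnion, mem_filter]
    exact ⟨fun hv => (hS v hv).imp fun e he => ⟨he.1, hv, he.2⟩,
      fun ⟨_, _, hv, _⟩ => hv⟩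
  · exact fun e he f hf hef => disjoint_left.2 fun v hve hvf =>
      hM e he f hf hef v (mem_filter.1 hve).2 (mem_filter.1 hvf).2

/-- Colour `i` is the matching `F i`, and `d i` is the edge that a rainbow matching on the colours
`J` takes from it. -/
def IsRainbow {n : ℕ} (F : Fin n → Finset (Sym2 V)) (J : Finset (Fin n))
    (d : Fin n → Sym2 V) : Prop :=
  (∀ i ∈ J, d i ∈ F i) ∧ ∀ i ∈ J, ∀ j ∈ J, i ≠ j → VertexDisjoint (d i) (d j)

lemma isRainbow_insert {n : ℕ} {F : Fin n → Finset (Sym2 V)} {N : Finset (Fin n)}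
    {d : Fin n → Sym2 V} {a : Fin n} (ha : a ∉ N) :
    IsRainbow F (insert a N) d ↔
      d a ∈ F a ∧ (∀ b ∈ N, VertexDisjoint (d a) (d b)) ∧ IsRainbow F N d := by
  simp only [IsRainbow, forall_mem_insert, ne_eq, not_true_eq_false, IsEmpty.forall_iff,
    true_and]
  constructor
  · rintro ⟨⟨hFa, hF⟩, hda, hd⟩
    exact ⟨hFa, fun b hb => hda b hb (ne_of_mem_of_not_mem hb ha).symm, hF,
      fun i hi j hj => (hd i hi).2 j hj⟩
  · rintro ⟨hFa, hda, hF, hd⟩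
    exact ⟨⟨hFa, hF⟩, fun b hb _ => hda b hb,
      fun i hi => ⟨fun _ => (hda i hi).symm, fun j hj => hd i hi j hj⟩⟩

lemma isRainbow_singleton {n : ℕ} {F : Fin n → Finset (Sym2 V)} {d : Fin n → Sym2 V}
    {a : Fin n} : IsRainbow F {a} d ↔ d a ∈ F a := by
  simp [IsRainbow]

lemma three_mul_sub_mul_sub_le_of_le {n q u b : ℕ} (hn : n = q + u)
    (hb : 0 < u → n + b ≤ 2 * q) (h : 2 * n * u + 4 * b ≤ 2 * q * u + 4 * q + u * b) :
    (3 * (n : ℝ) - 4 * q) * (n - q) ≤ 6 * q := by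
  subst hn
  rcases Nat.eq_zero_or_pos u with rfl | hu
  · simp
  have hbu : b + u ≤ q := by have := hb hu; omega
  have hbu' : (b : ℝ) + u ≤ q := by exact_mod_cast hbu
  have h' : 2 * ((q : ℝ) + u) * u + 4 * b ≤ 2 * q * u + 4 * q + u * b := by exact_mod_cast h
  push_cast
  nlinarith [mul_nonneg (sub_nonneg.2 hbu') (Nat.cast_nonneg (α := ℝ) u)]

structure MaxRainbowMatching (V : Type*) where
  n : ℕ
  F : Fin n → Finset (Sym2 V)
  not_isDiag : ∀ i, ∀ e ∈ F i, ¬ e.IsDiag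
  isMatching : ∀ i, ∀ e ∈ F i, ∀ f ∈ F i, e ≠ f → VertexDisjoint e f
  card_F : ∀ i, (F i).card = n
  disjoint_F : ∀ i j, i ≠ j → Disjoint (F i) (F j)
  I : Finset (Fin n)
  c : Fin n → Sym2 V
  isRainbow : IsRainbow F I c
  card_le : ∀ J d, IsRainbow F J d → J.card ≤ I.card

namespace MaxRainbowMatching

variable (C : MaxRainbowMatching V)

def verts : Finset V := C.I.biUnion fun j => (C.c j).toFinset

variable {C}

lemma mem_verts {v : V} : v ∈ C.verts ↔ ∃ j ∈ C.I, v ∈ C.c j := by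
  simp [verts, Sym2.mem_toFinset]

lemma eq_of_mem_c {j j' : Fin C.n} (hj : j ∈ C.I) (hj' : j' ∈ C.I) {v : V} (hv : v ∈ C.c j)
    (hv' : v ∈ C.c j') : j = j' :=
  by_contra fun hne => C.isRainbow.2 j hj j' hj' hne v hv hv'

lemma not_isDiag_c {j : Fin C.n} (hj : j ∈ C.I) : ¬ (C.c j).IsDiag :=
  C.not_isDiag j _ (C.isRainbow.1 j hj)

lemma mem_verts_of_c_eq {j : Fin C.n} (hj : j ∈ C.I) {x y : V} (hxy : C.c j = s(x, y)) :
    x ∈ C.verts ∧ y ∈ C.verts :=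
  ⟨mem_verts.2 ⟨j, hj, hxy ▸ Sym2.mem_mk_left x y⟩,
    mem_verts.2 ⟨j, hj, hxy ▸ Sym2.mem_mk_right x y⟩⟩

lemma ne_of_c_eq {j : Fin C.n} (hj : j ∈ C.I) {x y : V} (hxy : C.c j = s(x, y)) : x ≠ y := by
  simpa [hxy] using not_isDiag_c hj

lemma pairwiseDisjoint_toFinset_c :
    (C.I : Set (Fin C.n)).PairwiseDisjoint fun j => (C.c j).toFinset :=
  fun i hi j hj hij => disjoint_left.2 fun v hvi hvj =>
    C.isRainbow.2 i hi j hj hij v (Sym2.mem_toFinset.1 hvi) (Sym2.mem_toFinset.1 hvj)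

lemma card_verts : C.verts.card = 2 * C.I.card := by
  rw [verts, card_biUnion pairwiseDisjoint_toFinset_c,
    sum_congr rfl fun j hj => Sym2.card_toFinset_of_not_isDiag _ (not_isDiag_c hj), sum_const,
    smul_eq_mul, mul_comm]

lemma sum_verts {M : Type*} [AddCommMonoid M] (f : V → M) :
    ∑ v ∈ C.verts, f v = ∑ j ∈ C.I, ∑ v ∈ (C.c j).toFinset, f v :=
  sum_biUnion pairwiseDisjoint_toFinset_c

/-- Trading the edges `D` of the maximum rainbow matching for edges of unused colours `N` that
touch it only at vertices of `D` cannot gain. -/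
theorem card_le_card_of_exchange {D N : Finset (Fin C.n)} (hD : D ⊆ C.I) (hN : Disjoint N C.I)
    {d : Fin C.n → Sym2 V} (hd : IsRainbow C.F N d)
    (hout : ∀ a ∈ N, ∀ v ∈ d a, v ∈ C.verts → ∃ j ∈ D, v ∈ C.c j) :
    N.card ≤ D.card := by
  set d' : Fin C.n → Sym2 V := fun a => if a ∈ N then d a else C.c a
  have hJ : IsRainbow C.F (C.I \ D ∪ N) d' := by
    refine ⟨fun a ha => ?_, fun a ha b hb hab => ?_⟩
    · by_cases haN : a ∈ N
      · simpa [d', haN] using hd.1 a haN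
      · simpa [d', haN] using C.isRainbow.1 a (by simp_all)
    · have new_old : ∀ a ∈ N, ∀ b ∈ C.I \ D, VertexDisjoint (d a) (C.c b) := by
        intro a ha b hb v hva hvb
        obtain ⟨j, hjD, hvj⟩ := hout a ha v hva (mem_verts.2 ⟨b, (mem_sdiff.1 hb).1, hvb⟩)
        obtain rfl := eq_of_mem_c (hD hjD) (mem_sdiff.1 hb).1 hvj hvb
        exact (mem_sdiff.1 hb).2 hjD
      have notN : ∀ a ∈ C.I \ D ∪ N, a ∉ N → a ∈ C.I \ D :=
        fun a ha h => (mem_union.1 ha).resolve_right h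
      by_cases haN : a ∈ N <;> by_cases hbN : b ∈ N <;>
        simp only [d', haN, hbN, if_true, if_false]
      · exact hd.2 a haN b hbN hab
      · exact new_old a haN b (notN b hb hbN)
      · exact (new_old b hbN a (notN a ha haN)).symm
      · exact C.isRainbow.2 a (mem_sdiff.1 (notN a ha haN)).1 b (mem_sdiff.1 (notN b hb hbN)).1
          hab
  have hcard := C.card_le _ _ hJ
  rw [card_union_of_disjoint (disjoint_left.2 fun a ha haN =>
    disjoint_left.1 hN haN (mem_sdiff.1 ha).1), card_sdiff_of_subset hD] at hcard
  have := card_le_card hD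
  omega

lemma exists_mem_verts {k : Fin C.n} (hk : k ∉ C.I) {e : Sym2 V} (he : e ∈ C.F k) :
    ∃ v ∈ e, v ∈ C.verts := by
  by_contra! h
  have := card_le_card_of_exchange (D := ∅) (N := {k}) (d := fun _ => e) (empty_subset _)
    (disjoint_singleton_left.2 hk) (isRainbow_singleton.2 he)
    (fun _ _ v hv hvR => absurd hvR (h v hv))
  simp at this

variable (C)

def covered (k : Fin C.n) : Finset V := C.verts.filter fun v => ∃ e ∈ C.F k, v ∈ e

def IsPendant (k : Fin C.n) (v : V) : Prop := ∃ w ∉ C.verts, s(v, w) ∈ C.F k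

def pendant (k : Fin C.n) : Finset V := C.verts.filter (C.IsPendant k)

def pendantDegree (v : V) : ℕ := (C.Iᶜ.filter fun k => C.IsPendant k v).card

variable {C}

lemma card_covered_le (k : Fin C.n) : (C.covered k).card ≤ 2 * C.I.card :=
  card_verts (C := C) ▸ card_filter_le _ _

lemma two_mul_le_card_covered_add_card_pendant {k : Fin C.n} (hk : k ∉ C.I) :
    2 * C.n ≤ (C.covered k).card + (C.pendant k).card := by
  have hcov : ∀ v ∈ C.covered k, ∃ e ∈ C.F k, v ∈ e := fun v hv => (mem_filter.1 hv).2
  have hpend : ∀ v ∈ C.pendant k, ∃ e ∈ C.F k, v ∈ e := fun v hv => by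
    obtain ⟨w, -, hw⟩ := (mem_filter.1 hv).2
    exact ⟨_, hw, Sym2.mem_mk_left v w⟩
  rw [card_eq_sum_card_filter_mem (C.isMatching k) hcov,
    card_eq_sum_card_filter_mem (C.isMatching k) hpend, ← sum_add_distrib, ← C.card_F k,
    mul_comm, ← smul_eq_mul, ← sum_const]
  refine sum_le_sum fun e he => ?_
  induction e using Sym2.ind with
  | _ a b =>
  have hab : a ≠ b := fun h => C.not_isDiag k _ he (Sym2.mk_isDiag_iff.2 h)
  obtain ⟨v, hv, hvR⟩ := exists_mem_verts hk he
  have mem_cov : ∀ x ∈ s(a, b), x ∈ C.verts → x ∈ (C.covered k).filter (· ∈ s(a, b)) :=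
    fun x hx hxR => mem_filter.2 ⟨mem_filter.2 ⟨hxR, _, he, hx⟩, hx⟩
  have mem_pend : ∀ x y, s(x, y) = s(a, b) → x ∈ C.verts → y ∉ C.verts →
      x ∈ (C.pendant k).filter (· ∈ s(a, b)) := fun x y hxy hxR hyR =>
    mem_filter.2 ⟨mem_filter.2 ⟨hxR, y, hyR, hxy ▸ he⟩, hxy ▸ Sym2.mem_mk_left x y⟩
  by_cases haR : a ∈ C.verts <;> by_cases hbR : b ∈ C.verts
  · have : {a, b} ⊆ (C.covered k).filter (· ∈ s(a, b)) := insert_subset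
      (mem_cov a (Sym2.mem_mk_left a b) haR)
      (singleton_subset_iff.2 (mem_cov b (Sym2.mem_mk_right a b) hbR))
    have := card_le_card this
    rw [card_pair hab] at this
    omega
  · have h1 := card_pos.2 ⟨a, mem_cov a (Sym2.mem_mk_left a b) haR⟩
    have h2 := card_pos.2 ⟨a, mem_pend a b rfl haR hbR⟩
    omega
  · have h1 := card_pos.2 ⟨b, mem_cov b (Sym2.mem_mk_right a b) hbR⟩
    have h2 := card_pos.2 ⟨b, mem_pend b a Sym2.eq_swap hbR haR⟩
    omega
  · rcases Sym2.mem_iff.1 hv with rfl | rfl <;> contradiction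

lemma pendantDegree_le (v : V) : C.pendantDegree v ≤ C.Iᶜ.card := card_filter_le _ _

lemma exists_isPendant_avoiding {x : V} (s : Finset (Fin C.n)) (w : V)
    (hx : s.card + 2 ≤ C.pendantDegree x) :
    ∃ i ∉ C.I, i ∉ s ∧ ∃ wi ∉ C.verts, wi ≠ w ∧ s(x, wi) ∈ C.F i := by
  have : 1 < ((C.Iᶜ.filter fun k => C.IsPendant k x) \ s).card := by
    have := le_card_sdiff s (C.Iᶜ.filter fun k => C.IsPendant k x)
    rw [pendantDegree] at hx
    omega
  obtain ⟨i₁, hi₁, i₂, hi₂, hne⟩ := one_lt_card.1 this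
  simp only [mem_sdiff, mem_filter, mem_compl] at hi₁ hi₂
  obtain ⟨⟨hi₁I, w₁, hw₁, he₁⟩, hi₁s⟩ := hi₁
  obtain ⟨⟨hi₂I, w₂, hw₂, he₂⟩, hi₂s⟩ := hi₂
  by_cases h : w₁ = w
  · refine ⟨i₂, hi₂I, hi₂s, w₂, hw₂, fun h₂ => ?_, he₂⟩
    subst h h₂
    exact disjoint_left.1 (C.disjoint_F i₁ i₂ hne) he₁ he₂
  · exact ⟨i₁, hi₁I, hi₁s, w₁, hw₁, h, he₁⟩

lemma pendantDegree_le_two {j : Fin C.n} (hj : j ∈ C.I) {x y : V} (hxy : C.c j = s(x, y))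
    (hy : 1 ≤ C.pendantDegree y) : C.pendantDegree x ≤ 2 := by
  by_contra! hx
  obtain ⟨hxR, hyR⟩ := mem_verts_of_c_eq hj hxy
  obtain ⟨b, hb⟩ := card_pos.1 hy
  simp only [mem_filter, mem_compl] at hb
  obtain ⟨hbI, wb, hwb, heb⟩ := hb
  obtain ⟨a, haI, hab, wa, hwa, hwab, hea⟩ :=
    exists_isPendant_avoiding (x := x) {b} wb (by rw [card_singleton]; omega)
  rw [mem_singleton] at hab
  -- trade `xy` for `x wa` and `y wb`
  have := card_le_card_of_exchange (D := {j}) (N := {a, b})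
    (d := fun t => if t = a then s(x, wa) else s(y, wb)) (singleton_subset_iff.2 hj)
    (by simp [haI, hbI]) ?_ ?_
  · rw [card_pair hab, card_singleton] at this
    omega
  · rw [isRainbow_insert (by simpa using hab), isRainbow_singleton]
    simp only [if_true, if_neg (Ne.symm hab), mem_singleton, forall_eq, vertexDisjoint_mk]
    refine ⟨hea, ⟨ne_of_c_eq hj hxy, ?_, ?_, hwab⟩, heb⟩
    · rintro rfl; exact hwb hxR
    · rintro rfl; exact hwa hyR
  · simp [Sym2.mem_iff, hxy, hwa, hwb, Ne.symm hab]

variable (C)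

def barren : Finset V :=
  C.verts.filter fun y => ∃ j ∈ C.I, ∃ x, C.c j = s(x, y) ∧ 4 ≤ C.pendantDegree x

variable {C}

lemma mem_barren_iff {j : Fin C.n} (hj : j ∈ C.I) {x y : V} (hxy : C.c j = s(x, y)) :
    y ∈ C.barren ↔ 4 ≤ C.pendantDegree x := by
  refine ⟨fun hy => ?_,
    fun hx => mem_filter.2 ⟨(mem_verts_of_c_eq hj hxy).2, j, hj, x, hxy, hx⟩⟩
  obtain ⟨-, j', hj', x', hxy', hx'⟩ := mem_filter.1 hy
  obtain rfl := eq_of_mem_c hj hj' (hxy ▸ Sym2.mem_mk_right x y) (hxy' ▸ Sym2.mem_mk_right x' y)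
  rwa [Sym2.congr_left.1 (hxy.symm.trans hxy')]

lemma pendantDegree_eq_zero_of_mem_barren {y : V} (hy : y ∈ C.barren) :
    C.pendantDegree y = 0 := by
  obtain ⟨-, j, hj, x, hxy, hx⟩ := mem_filter.1 hy
  by_contra h
  have := pendantDegree_le_two hj hxy (Nat.one_le_iff_ne_zero.2 h)
  omega

lemma not_isPendant_of_mem_barren {y : V} (hy : y ∈ C.barren) {k : Fin C.n} (hk : k ∉ C.I) :
    ¬ C.IsPendant k y := fun h => by
  have : 0 < C.pendantDegree y := card_pos.2 ⟨k, mem_filter.2 ⟨mem_compl.2 hk, h⟩⟩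
  rw [pendantDegree_eq_zero_of_mem_barren hy] at this
  exact this.false

lemma mk_notMem_F_of_mem_barren {y y' : V} (hy : y ∈ C.barren) (hy' : y' ∈ C.barren)
    {k : Fin C.n} (hk : k ∉ C.I) : s(y, y') ∉ C.F k := by
  intro he
  obtain ⟨-, j, hj, x, hxy, hx⟩ := mem_filter.1 hy
  obtain ⟨-, j', hj', x', hxy', hx'⟩ := mem_filter.1 hy'
  obtain ⟨hxR, hyR⟩ := mem_verts_of_c_eq hj hxy
  obtain ⟨hxR', hyR'⟩ := mem_verts_of_c_eq hj' hxy'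
  have hyy' : y ≠ y' := fun h => C.not_isDiag k _ he (Sym2.mk_isDiag_iff.2 h)
  have hy0 := pendantDegree_eq_zero_of_mem_barren hy
  have hjj' : j ≠ j' := by
    rintro rfl
    rcases Sym2.eq_iff.1 (hxy.symm.trans hxy') with ⟨-, h⟩ | ⟨-, rfl⟩
    · exact hyy' h
    · omega
  have sep : ∀ v ∈ C.c j, ∀ v' ∈ C.c j', v ≠ v' := fun v hv v' hv' h =>
    C.isRainbow.2 j hj j' hj' hjj' v hv (h ▸ hv')
  rw [hxy, hxy'] at sep
  obtain ⟨m, hmI, hmk, wm, hwm, -, hem⟩ :=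
    exists_isPendant_avoiding (x := x') {k} y (by rw [card_singleton]; omega)
  obtain ⟨i, hiI, hikm, wi, hwi, hwim, hei⟩ :=
    exists_isPendant_avoiding (x := x) {k, m} wm
      (by rw [card_pair (by simpa [eq_comm] using hmk)]; omega)
  simp only [mem_insert, mem_singleton, not_or] at hikm hmk
  -- trade `xy` and `x'y'` for `x wi`, `y y'` and `x' wm`
  have := card_le_card_of_exchange (D := {j, j'}) (N := {i, k, m})
    (d := fun t => if t = i then s(x, wi) else if t = k then s(y, y') else s(x', wm))
    (insert_subset hj (singleton_subset_iff.2 hj')) (by simp [hiI, hk, hmI]) ?_ ?_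
  · rw [card_pair hjj', card_eq_three.2 ⟨i, k, m, hikm.1, hikm.2, Ne.symm hmk, rfl⟩] at this
    omega
  · rw [isRainbow_insert (by simpa using hikm), isRainbow_insert (by simpa using Ne.symm hmk),
      isRainbow_singleton]
    simp only [mem_insert, mem_singleton, forall_eq_or_imp, forall_eq, if_true,
      if_neg (Ne.symm hikm.1), if_neg (Ne.symm hikm.2), if_neg hmk, vertexDisjoint_mk]
    have sep' := fun v hv v' hv' => sep v (Sym2.mem_iff.2 hv) v' (Sym2.mem_iff.2 hv')
    refine ⟨hei, ⟨⟨?_, ?_, ?_, ?_⟩, ?_, ?_, ?_, hwim⟩, he, ⟨?_, ?_, ?_, ?_⟩, hem⟩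
    exacts [ne_of_c_eq hj hxy, sep' x (.inl rfl) y' (.inr rfl),
      (ne_of_mem_of_not_mem hyR hwi).symm, (ne_of_mem_of_not_mem hyR' hwi).symm,
      sep' x (.inl rfl) x' (.inl rfl), ne_of_mem_of_not_mem hxR hwm,
      (ne_of_mem_of_not_mem hxR' hwi).symm, sep' y (.inr rfl) x' (.inl rfl),
      ne_of_mem_of_not_mem hyR hwm, (ne_of_c_eq hj' hxy').symm, ne_of_mem_of_not_mem hyR' hwm]
  · simp [Sym2.mem_iff, hxy, hxy', hwi, hwm, Ne.symm hikm.1, Ne.symm hikm.2, hmk]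

lemma card_barren_inter_covered_add_le {k : Fin C.n} (hk : k ∉ C.I) :
    (C.barren ∩ C.covered k).card + C.barren.card + (C.pendant k).card ≤ 2 * C.I.card := by
  set partners := C.verts.filter fun z => ∃ y ∈ C.barren, s(y, z) ∈ C.F k
  have hpartners : (C.barren ∩ C.covered k).card ≤ partners.card := by
    refine card_le_card_of_forall_subsingleton (fun y z => s(y, z) ∈ C.F k) (fun y hy => ?_)
      fun z _ y₁ hy₁ y₂ hy₂ => ?_
    · obtain ⟨hyB, hyC⟩ := mem_inter.1 hy
      obtain ⟨-, e, he, hye⟩ := mem_filter.1 hyC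
      obtain ⟨z, rfl⟩ := Sym2.mem_iff_exists.1 hye
      have hzR : z ∈ C.verts :=
        by_contra fun hz => not_isPendant_of_mem_barren hyB hk ⟨z, hz, he⟩
      exact ⟨z, mem_filter.2 ⟨hzR, y, hyB, he⟩, he⟩
    · by_contra hne
      exact C.isMatching k _ hy₁.2 _ hy₂.2 (fun h => hne (Sym2.congr_left.1 h)) z
        (Sym2.mem_mk_right _ _) (Sym2.mem_mk_right _ _)
  have hBP : Disjoint C.barren (C.pendant k) := disjoint_left.2 fun y hy hyP =>
    not_isPendant_of_mem_barren hy hk (mem_filter.1 hyP).2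
  have hBZ : Disjoint C.barren partners := disjoint_left.2 fun z hz hzZ => by
    obtain ⟨y, hy, he⟩ := (mem_filter.1 hzZ).2
    exact mk_notMem_F_of_mem_barren hy hz hk he
  have hPZ : Disjoint (C.pendant k) partners := disjoint_left.2 fun z hzP hzZ => by
    obtain ⟨w, hw, hew⟩ := (mem_filter.1 hzP).2
    obtain ⟨y, hy, hey⟩ := (mem_filter.1 hzZ).2
    have hyR := (mem_filter.1 hy).1
    by_cases h : s(z, w) = s(y, z)
    · have : w ∈ s(y, z) := h ▸ Sym2.mem_mk_right z w
      rcases Sym2.mem_iff.1 this with rfl | rfl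
      · exact hw hyR
      · exact hw (mem_filter.1 hzZ).1
    · exact C.isMatching k _ hew _ hey h z (Sym2.mem_mk_left z w) (Sym2.mem_mk_right y z)
  calc (C.barren ∩ C.covered k).card + C.barren.card + (C.pendant k).card
      ≤ partners.card + C.barren.card + (C.pendant k).card := by omega
    _ = (C.barren ∪ C.pendant k ∪ partners).card := by
      rw [card_union_of_disjoint (disjoint_union_left.2 ⟨hBZ, hPZ⟩), card_union_of_disjoint hBP]
      ring
    _ ≤ C.verts.card := card_le_card (union_subset (union_subset (filter_subset _ _)
        (filter_subset _ _)) (filter_subset _ _))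
    _ = 2 * C.I.card := card_verts

lemma sum_c_pendantDegree_add_le {j : Fin C.n} (hj : j ∈ C.I) :
    ∑ v ∈ (C.c j).toFinset, (C.pendantDegree v + 4 * if v ∈ C.barren then 1 else 0) ≤
      4 + ∑ v ∈ (C.c j).toFinset, C.Iᶜ.card * if v ∈ C.barren then 1 else 0 := by
  obtain ⟨x, y, hxy⟩ : ∃ x y, C.c j = s(x, y) := Sym2.exists.1 ⟨_, rfl⟩
  have hyx : C.c j = s(y, x) := hxy.trans Sym2.eq_swap
  rw [hxy, Sym2.toFinset_mk_eq, sum_pair (ne_of_c_eq hj hxy), sum_pair (ne_of_c_eq hj hxy)]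
  simp only [mem_barren_iff hj hxy, mem_barren_iff hj hyx]
  have := pendantDegree_le_two hj hxy
  have := pendantDegree_le_two hj hyx
  have := pendantDegree_le (C := C) x
  have := pendantDegree_le (C := C) y
  split_ifs <;> omega

lemma sum_pendantDegree_add_le :
    ∑ v ∈ C.verts, C.pendantDegree v + 4 * C.barren.card ≤
      4 * C.I.card + C.Iᶜ.card * C.barren.card := by
  have hB : C.barren.card = ∑ v ∈ C.verts, if v ∈ C.barren then 1 else 0 := by
    rw [sum_boole, filter_mem_eq_inter,
      inter_eq_right.2 (show C.barren ⊆ C.verts from filter_subset _ _), Nat.cast_id]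
  calc ∑ v ∈ C.verts, C.pendantDegree v + 4 * C.barren.card
      = ∑ j ∈ C.I, ∑ v ∈ (C.c j).toFinset,
          (C.pendantDegree v + 4 * if v ∈ C.barren then 1 else 0) := by
        rw [← sum_verts, sum_add_distrib, ← mul_sum, hB]
    _ ≤ ∑ j ∈ C.I,
          (4 + ∑ v ∈ (C.c j).toFinset, C.Iᶜ.card * if v ∈ C.barren then 1 else 0) :=
        sum_le_sum fun j hj => sum_c_pendantDegree_add_le hj
    _ = 4 * C.I.card + C.Iᶜ.card * C.barren.card := by
        rw [sum_add_distrib, ← sum_verts, ← mul_sum, ← hB, sum_const, smul_eq_mul, mul_comm]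

lemma sum_card_pendant :
    ∑ k ∈ C.Iᶜ, (C.pendant k).card = ∑ v ∈ C.verts, C.pendantDegree v :=
  sum_card_bipartiteAbove_eq_sum_card_bipartiteBelow _

lemma card_barren_add_card_covered_le (k : Fin C.n) :
    C.barren.card + (C.covered k).card ≤ (C.barren ∩ C.covered k).card + 2 * C.I.card := by
  rw [← card_union_add_card_inter, add_comm, ← card_verts]
  exact Nat.add_le_add_left
    (card_le_card (union_subset (filter_subset _ _) (filter_subset _ _))) _

variable (C) in
theorem three_mul_sub_mul_sub_le :
    (3 * (C.n : ℝ) - 4 * C.I.card) * (C.n - C.I.card) ≤ 6 * C.I.card := by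
  refine three_mul_sub_mul_sub_le_of_le (u := C.Iᶜ.card) (b := C.barren.card) ?_ ?_ ?_
  · rw [card_compl, Fintype.card_fin]
    have := card_le_univ C.I
    rw [Fintype.card_fin] at this
    omega
  · intro hu
    obtain ⟨k, hk⟩ := card_pos.1 hu
    have := two_mul_le_card_covered_add_card_pendant (mem_compl.1 hk)
    have := card_barren_inter_covered_add_le (mem_compl.1 hk)
    have := card_barren_add_card_covered_le (C := C) k
    omega
  · have hpend :
        ∑ k ∈ C.Iᶜ, 2 * C.n ≤ ∑ k ∈ C.Iᶜ, ((C.covered k).card + (C.pendant k).card) :=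
      sum_le_sum fun k hk => two_mul_le_card_covered_add_card_pendant (mem_compl.1 hk)
    have hcov : ∑ k ∈ C.Iᶜ, (C.covered k).card ≤ ∑ k ∈ C.Iᶜ, 2 * C.I.card :=
      sum_le_sum fun k _ => card_covered_le k
    rw [sum_add_distrib, sum_card_pendant] at hpend
    simp only [sum_const, smul_eq_mul] at hpend hcov
    have := sum_pendantDegree_add_le (C := C)
    nlinarith

end MaxRainbowMatching

end

end RainbowMatching

open RainbowMatching in
theorem stmt_19_general {V : Type*} (G : SimpleGraph V) (n : ℕ)
    (F : Fin n → Finset (Sym2 V))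
    (hedges : ∀ i, ∀ e ∈ F i, e ∈ G.edgeSet)
    (hmatch : ∀ i, ∀ e ∈ F i, ∀ f ∈ F i, e ≠ f → ∀ v, v ∈ e → v ∉ f)
    (hsize : ∀ i, (F i).card = n)
    (hdisjF : ∀ i j, i ≠ j → Disjoint (F i) (F j))
    (I : Finset (Fin n)) (c : Fin n → Sym2 V)
    (hc : ∀ i ∈ I, c i ∈ F i)
    (hdisj : ∀ i ∈ I, ∀ j ∈ I, i ≠ j → ∀ v, v ∈ c i → v ∉ c j)
    (hmax : ∀ (J : Finset (Fin n)) (d : Fin n → Sym2 V),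
      (∀ i ∈ J, d i ∈ F i) →
      (∀ i ∈ J, ∀ j ∈ J, i ≠ j → ∀ v, v ∈ d i → v ∉ d j) →
      J.card ≤ I.card) :
    (3 * (n : ℝ) - 4 * (I.card : ℝ)) * ((n : ℝ) - (I.card : ℝ)) ≤ 6 * (I.card : ℝ) :=
  MaxRainbowMatching.three_mul_sub_mul_sub_le
    { n, F, I, c, isMatching := hmatch, card_F := hsize, disjoint_F := hdisjF
      not_isDiag := fun i e he => G.not_isDiag_of_mem_edgeSet (hedges i e he)
      isRainbow := ⟨hc, hdisj⟩
      card_le := fun J d hd => hmax J d hd.1 hd.2 }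

/-- Let `F₁, …, Fₙ` be pairwise disjoint matchings of size `n` in a
graph, and let `q = |I|` be the maximum size of a rainbow matching. Then
`(3n - 4q)(n - q) ≤ 6q`. -/
theorem stmt_19 {V : Type*} [DecidableEq V] (G : SimpleGraph V) (n : ℕ)
    (F : Fin n → Finset (Sym2 V))
    (hedges : ∀ i, ∀ e ∈ F i, e ∈ G.edgeSet)
    (hmatch : ∀ i, ∀ e ∈ F i, ∀ f ∈ F i, e ≠ f → ∀ v, v ∈ e → v ∉ f)
    (hsize : ∀ i, (F i).card = n)
    (hdisjF : ∀ i j, i ≠ j → Disjoint (F i) (F j))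
    (I : Finset (Fin n)) (c : Fin n → Sym2 V)
    (hc : ∀ i ∈ I, c i ∈ F i)
    (hdisj : ∀ i ∈ I, ∀ j ∈ I, i ≠ j → ∀ v, v ∈ c i → v ∉ c j)
    (hmax : ∀ (J : Finset (Fin n)) (d : Fin n → Sym2 V),
      (∀ i ∈ J, d i ∈ F i) →
      (∀ i ∈ J, ∀ j ∈ J, i ≠ j → ∀ v, v ∈ d i → v ∉ d j) →
      J.card ≤ I.card) :
    (3 * (n : ℝ) - 4 * (I.card : ℝ)) * ((n : ℝ) - (I.card : ℝ)) ≤ 6 * (I.card : ℝ) :=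
  stmt_19_general G n F hedges hmatch hsize hdisjF I c hc hdisj hmax
end
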